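/- If (b,a) is an n-good pair with s(n) = s > 2, then a ≤ f_{s-1} and b ≤ 2·f_{s-1}. -/

import Mathlib

def reaches (n : ℤ) (s : ℕ) : Prop :=
  ∃ a b : ℤ, 1 ≤ a ∧ 1 ≤ b ∧ n = a * (Nat.fib (s - 1) : ℤ) + b * (Nat.fib (s - 2) : ℤ)

def isSlow (n : ℤ) (s : ℕ) : Prop :=
  reaches n s ∧ ∀ s', reaches n s' → s' ≤ s

def isGood (n : ℤ) (s : ℕ) (b a : ℤ) : Prop :=
  1 ≤ a ∧ 1 ≤ b ∧ n = a * (Nat.fib (s - 1) : ℤ) + b * (Nat.fib (s - 2) : ℤ)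

/-! Writing `p = f_{s-1}`, `q = f_{s-2}`, a representation `n = a p + b q` with `1 ≤ b < a` gives
`n = b f_s + (a - b) p`, so `n` reaches `s + 1`. Hence at the slow level every representation with
`b ≥ 1` has `a ≤ b`. Shifting a good pair along the lattice direction `(q, -p)` until `b` lands in
`[1, p]` gives `a + k q ≤ b - k p ≤ p` with `k ≥ 0`; this bounds `a` by `p`, and if `b > 2p` then
`k ≥ 2`, so `a + 2q ≤ p ≤ 2q` contradicts `a ≥ 1`. -/

lemma Nat.fib_add_two_le_two_mul_fib_add_one (m : ℕ) : fib (m + 2) ≤ 2 * fib (m + 1) := by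
  rw [fib_add_two, two_mul]
  exact Nat.add_le_add_right fib_le_fib_succ _

lemma Nat.fib_sub_one_add_fib_sub_two {s : ℕ} (hs : 2 ≤ s) :
    fib (s - 1) + fib (s - 2) = fib s := by
  obtain ⟨m, rfl⟩ : ∃ m, s = m + 2 := ⟨s - 2, by omega⟩
  rw [fib_add_two, Nat.add_sub_cancel, add_comm]
  rfl

lemma Int.exists_sub_mul_mem_Icc {b p : ℤ} (hp : 0 < p) (hb : 1 ≤ b) :
    ∃ k, 0 ≤ k ∧ 1 ≤ b - k * p ∧ b - k * p ≤ p := by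
  refine ⟨(b - 1) / p, Int.ediv_nonneg (by omega) hp.le, ?_⟩
  have hdiv := Int.emod_add_mul_ediv (b - 1) p
  have hlt := Int.emod_lt_of_pos (b - 1) hp
  have hnonneg := Int.emod_nonneg (b - 1) hp.ne'
  constructor <;> linarith

lemma reaches_succ_of_lt {n a b : ℤ} {s : ℕ} (hs : 2 ≤ s) (hb : 1 ≤ b) (hba : b < a)
    (hn : n = a * Nat.fib (s - 1) + b * Nat.fib (s - 2)) : reaches n (s + 1) := by
  refine ⟨b, a - b, hb, by omega, ?_⟩
  rw [hn, Nat.add_sub_cancel, show s + 1 - 2 = s - 1 by omega,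
    ← Nat.fib_sub_one_add_fib_sub_two hs]
  push_cast
  ring

lemma isSlow.le_of_repr {n a b : ℤ} {s : ℕ} (h : isSlow n s) (hs : 2 ≤ s) (hb : 1 ≤ b)
    (hn : n = a * Nat.fib (s - 1) + b * Nat.fib (s - 2)) : a ≤ b := by
  by_contra! hba
  have := h.2 _ (reaches_succ_of_lt hs hb hba hn)
  omega

theorem stmt6 (n : ℤ) (s : ℕ) (hs : isSlow n s) (hs2 : 2 < s)
    (a b : ℤ) (h : isGood n s b a) :
    a ≤ (Nat.fib (s - 1) : ℤ) ∧ b ≤ 2 * (Nat.fib (s - 1) : ℤ) := by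
  obtain ⟨ha, hb, hn⟩ := h
  have hp : (0 : ℤ) < Nat.fib (s - 1) := by exact_mod_cast Nat.fib_pos.mpr (by omega)
  have hpq : (Nat.fib (s - 1) : ℤ) ≤ 2 * Nat.fib (s - 2) := by
    have := Nat.fib_add_two_le_two_mul_fib_add_one (s - 3)
    rw [show s - 3 + 2 = s - 1 by omega, show s - 3 + 1 = s - 2 by omega] at this
    exact_mod_cast this
  set p : ℤ := (Nat.fib (s - 1) : ℤ)
  set q : ℤ := (Nat.fib (s - 2) : ℤ)
  have hq : 0 ≤ q := by positivity
  obtain ⟨k, hk, hbk, hbkp⟩ := Int.exists_sub_mul_mem_Icc hp hb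
  have hshift : a + k * q ≤ b - k * p := hs.le_of_repr (by omega) hbk (by rw [hn]; ring)
  refine ⟨by nlinarith, ?_⟩
  by_contra! hb2
  have hk2 : 2 ≤ k := by nlinarith
  nlinarith
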